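/- Let H_y be the Hessian matrix of a form F at a point y with F(y) = 0 and ∇F(y) ≠ 0, and suppose H_y·y is a nonzero multiple of ∇F(y). Define M₂(y) as the set of vectors h such that (∇F(y))·h = 0 and (H_y h)·x = 0 for all x with (∇F(y))·x = 0. Then M₂(y) is contained in the linear span of ker H_y and y; in particular dim M₂(y) ≤ dim ker H_y + 1. -/

import Mathlib

/-! For `h ∈ M₂` the vector `H h` annihilates the hyperplane `g⊥`, so `H h = a • g` for some `a`.
By Euler, `a • g = (a / c) • H y`, hence `h - (a / c) • y ∈ ker H`. -/

open Matrix Submodule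

theorem exists_eq_smul_of_forall_dotProduct_eq_zero {ι K : Type*} [Fintype ι] [DecidableEq ι]
    [Field K] {g v : ι → K} (hg : g ≠ 0) (h : ∀ x, g ⬝ᵥ x = 0 → v ⬝ᵥ x = 0) :
    ∃ a : K, v = a • g := by
  obtain ⟨i, hi⟩ := Function.ne_iff.mp hg
  refine ⟨v i / g i, funext fun j => ?_⟩
  have key := h (g i • Pi.single j 1 - g j • Pi.single i 1) (by
    simp only [dotProduct_sub, dotProduct_smul, dotProduct_single, smul_eq_mul]
    ring)
  simp only [dotProduct_sub, dotProduct_smul, dotProduct_single, smul_eq_mul] at key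
  simp only [Pi.smul_apply, smul_eq_mul, Pi.zero_apply] at hi ⊢
  field_simp
  linear_combination key

theorem mem_ker_sup_span_singleton_of_apply_eq_smul {R M N : Type*} [Ring R] [AddCommGroup M]
    [Module R M] [AddCommGroup N] [Module R N] {f : M →ₗ[R] N} {x y : M} {a : R}
    (hxy : f x = a • f y) : x ∈ LinearMap.ker f ⊔ R ∙ y := by
  have hker : x - a • y ∈ LinearMap.ker f := by
    rw [LinearMap.mem_ker, map_sub, map_smul, hxy, sub_self]
  simpa using add_mem_sup hker (smul_mem _ a (mem_span_singleton_self y))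

theorem finrank_sup_span_singleton_le {K V : Type*} [DivisionRing K] [AddCommGroup V]
    [Module K V] [FiniteDimensional K V] (p : Submodule K V) (v : V) :
    Module.finrank K ↥(p ⊔ K ∙ v) ≤ Module.finrank K p + 1 := by
  by_cases hv : v ∈ p
  · rw [sup_eq_left.mpr ((span_singleton_le_iff_mem v p).mpr hv)]
    exact Nat.le_succ _
  · exact (finrank_sup_span_singleton hv).le

theorem M2_subset_span_ker_and_y_general {K : Type*} [Field K]
    (n : ℕ) (H : Matrix (Fin n) (Fin n) K)
    (y g : Fin n → K) (hg : g ≠ 0) (c : K) (hc : c ≠ 0)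
    (hEuler : H.mulVec y = c • g)
    (M₂ : Set (Fin n → K))
    (hM₂ : M₂ = {h | g ⬝ᵥ h = 0 ∧ ∀ x : Fin n → K, g ⬝ᵥ x = 0 → (H.mulVec h) ⬝ᵥ x = 0}) :
    M₂ ⊆ ↑(Submodule.span K ((LinearMap.ker H.mulVecLin : Set (Fin n → K)) ∪ {y})) ∧
    Module.finrank K (Submodule.span K M₂)
      ≤ Module.finrank K (LinearMap.ker H.mulVecLin) + 1 := by
  have hspan : span K ((LinearMap.ker H.mulVecLin : Set (Fin n → K)) ∪ {y})
      = LinearMap.ker H.mulVecLin ⊔ K ∙ y := by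
    rw [span_union, span_eq]
  have hsub : M₂ ⊆ ↑(LinearMap.ker H.mulVecLin ⊔ K ∙ y) := by
    rw [hM₂]
    rintro h ⟨-, hperp⟩
    obtain ⟨a, ha⟩ := exists_eq_smul_of_forall_dotProduct_eq_zero hg hperp
    refine mem_ker_sup_span_singleton_of_apply_eq_smul (a := a / c) ?_
    rw [mulVecLin_apply, mulVecLin_apply, hEuler, ha, smul_smul, div_mul_cancel₀ _ hc]
  rw [hspan]
  exact ⟨hsub, (finrank_mono (span_le.mpr hsub)).trans (finrank_sup_span_singleton_le _ y)⟩

theorem M2_subset_span_ker_and_y {K : Type*} [Field K] [IsAlgClosed K] [CharZero K]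
    (n : ℕ) (H : Matrix (Fin n) (Fin n) K) (hH : H.IsSymm)
    (y g : Fin n → K) (hg : g ≠ 0) (c : K) (hc : c ≠ 0)
    (hEuler : H.mulVec y = c • g)
    (M₂ : Set (Fin n → K))
    (hM₂ : M₂ = {h | g ⬝ᵥ h = 0 ∧ ∀ x : Fin n → K, g ⬝ᵥ x = 0 → (H.mulVec h) ⬝ᵥ x = 0}) :
    M₂ ⊆ ↑(Submodule.span K ((LinearMap.ker H.mulVecLin : Set (Fin n → K)) ∪ {y})) ∧
    Module.finrank K (Submodule.span K M₂)
      ≤ Module.finrank K (LinearMap.ker H.mulVecLin) + 1 :=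
  M2_subset_span_ker_and_y_general n H y g hg c hc hEuler M₂ hM₂
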